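/- arXiv:2309.12059 — 2 statements merged into one kernel-verified Lean document; each statement's English description precedes it below -/
import Mathlib

section
/- Let q = AB be a query such that key(A) ⊆ key(B) or vars(A) ∩ vars(B) ⊆ key(B). Then for every database D, D ⊨ certain(q) if and only if ∅ ∈ Δ_2(q,D). -/
/- Consistent query answering framework: a single relation symbol of arity `n`
   whose first `l` positions form the primary key. Facts are `Fin n → Elem`,
   atoms are `Fin n → Var`. -/

namespace CQA

/-- Key-equality: the tuples of the first `l` entries coincide. -/
def keyEq (l : ℕ) {n : ℕ} {α : Type*} (s t : Fin n → α) : Prop :=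
  ∀ i : Fin n, (i : ℕ) < l → s i = t i

/-- The set of entries occurring in the first `l` (key) positions of a tuple. -/
def keySet (l : ℕ) {n : ℕ} {α : Type*} (t : Fin n → α) : Set α :=
  {x | ∃ i : Fin n, (i : ℕ) < l ∧ t i = x}

/-- The set of all entries of a tuple. -/
def varsSet {n : ℕ} {α : Type*} (t : Fin n → α) : Set α :=
  Set.range t

/-- A (two-atom, Boolean, self-join) query `q = AB` is a pair of atoms. -/
abbrev Query (n : ℕ) (Var : Type*) := (Fin n → Var) × (Fin n → Var)

variable {n : ℕ} {Elem Var : Type*}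

/-- The pair of facts `(a, b)` matches the two atoms of `q` via a single assignment `μ`. -/
def solPair (q : Query n Var) (a b : Fin n → Elem) : Prop :=
  ∃ μ : Var → Elem, (∀ i, μ (q.1 i) = a i) ∧ (∀ i, μ (q.2 i) = b i)

/-- `D ⊨ q(ab)` : `(a,b)` is a solution to `q` in `D`. -/
def Sol (q : Query n Var) (D : Set (Fin n → Elem)) (a b : Fin n → Elem) : Prop :=
  a ∈ D ∧ b ∈ D ∧ solPair q a b

/-- `D ⊨ q{ab}` : `(a,b)` or `(b,a)` is a solution to `q` in `D`. -/
def SolSym (q : Query n Var) (D : Set (Fin n → Elem)) (a b : Fin n → Elem) : Prop :=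
  Sol q D a b ∨ Sol q D b a

/-- The set `q(D)` of solutions to `q` in `D`. -/
def solSet (q : Query n Var) (D : Set (Fin n → Elem)) :
    Set ((Fin n → Elem) × (Fin n → Elem)) :=
  {p | Sol q D p.1 p.2}

/-- `D ⊨ q` : some solution to `q` exists in `D`. -/
def Sat (q : Query n Var) (D : Set (Fin n → Elem)) : Prop :=
  ∃ a b, Sol q D a b

/-- A database is consistent if it contains no two distinct key-equal facts. -/
def Consistent (l : ℕ) (D : Set (Fin n → Elem)) : Prop :=
  ∀ a ∈ D, ∀ b ∈ D, keyEq l a b → a = b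

/-- `r` is a repair of `D` : a maximal consistent subset of `D`. -/
def Repair (l : ℕ) (D r : Set (Fin n → Elem)) : Prop :=
  r ⊆ D ∧ Consistent l r ∧ ∀ s, r ⊆ s → s ⊆ D → Consistent l s → s = r

/-- `D ⊨ certain(q)` : all repairs of `D` satisfy `q`. -/
def Certain (l : ℕ) (q : Query n Var) (D : Set (Fin n → Elem)) : Prop :=
  ∀ r, Repair l D r → Sat q r

/-- The block of the fact `a` in `D`: all facts of `D` key-equal to `a`. -/
def Block (l : ℕ) (D : Set (Fin n → Elem)) (a : Fin n → Elem) : Set (Fin n → Elem) :=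
  {b ∈ D | keyEq l a b}

/-- A `k`-set of `D`: at most `k` facts of `D`, at most one from each block. -/
def kSet (l k : ℕ) (D S : Set (Fin n → Elem)) : Prop :=
  S ⊆ D ∧ S.Finite ∧ S.ncard ≤ k ∧ Consistent l S

/-- A collection `𝒮` of sets of facts is closed under the two rules defining `Δ_k(q,D)`:
  (i) every `k`-set satisfying `q` is in `𝒮`, and (ii) if for a `k`-set `S` there is
  a block of `D` each of whose facts `u` admits a subset `S' ⊆ S ∪ {u}` that is a
  `k`-set belonging to `𝒮`, then `S ∈ 𝒮`. -/
def DeltaClosed (l k : ℕ) (q : Query n Var) (D : Set (Fin n → Elem))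
    (𝒮 : Set (Set (Fin n → Elem))) : Prop :=
  (∀ S, kSet l k D S → Sat q S → S ∈ 𝒮) ∧
  (∀ S, kSet l k D S → (∃ x ∈ D, ∀ u ∈ D, keyEq l x u →
      ∃ S', S' ⊆ S ∪ {u} ∧ kSet l k D S' ∧ S' ∈ 𝒮) → S ∈ 𝒮)

/-- `Δ_k(q,D)`: the least collection of `k`-sets of `D` closed under the two rules
(the intersection of all closed collections). -/
def Delta (l k : ℕ) (q : Query n Var) (D : Set (Fin n → Elem)) :
    Set (Set (Fin n → Elem)) :=
  ⋂₀ {𝒮 | DeltaClosed l k q D 𝒮}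

/-- `q = AB` is 2way-determined. -/
def TwoWayDet (l : ℕ) (q : Query n Var) : Prop :=
  ¬ keySet l q.1 ⊆ keySet l q.2 ∧ ¬ keySet l q.2 ⊆ keySet l q.1 ∧
  keySet l q.1 ⊆ varsSet q.2 ∧ keySet l q.2 ⊆ varsSet q.1

/-- The zig-zag property of a query `q`, relative to databases over `Elem`. -/
def ZigZag (l : ℕ) (q : Query n Var) (Elem : Type*) : Prop :=
  ∀ D : Set (Fin n → Elem), D.Finite →
    ∀ a b b' c : Fin n → Elem, a ∈ D → b ∈ D → b' ∈ D → c ∈ D →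
      ¬ keyEq l a c → a ≠ b → keyEq l b b' →
      Sol q D a b → Sol q D c b' → Sol q D a b'

/-- `rkey(a, r)`: facts of `r` whose key entries are included in those of `a`. -/
def rkey (l : ℕ) (r : Set (Fin n → Elem)) (a : Fin n → Elem) : Set (Fin n → Elem) :=
  {c ∈ r | keySet l c ⊆ keySet l a}

open Classical in
/-- `g(e)`, the set of entries of the tuple `g̅(e)`, for `e` branching with `d, f`. -/
noncomputable def gSet (l : ℕ) (d e f : Fin n → Elem) : Set Elem :=
  if keySet l d ⊆ keySet l e ∧ ¬ keySet l f ⊆ keySet l e then keySet l d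
  else if ¬ keySet l d ⊆ keySet l e ∧ keySet l f ⊆ keySet l e then keySet l f
  else if keySet l d ⊆ keySet l f ∧ keySet l f ⊆ keySet l e then keySet l d
  else if keySet l f ⊆ keySet l d ∧ keySet l d ⊆ keySet l e then keySet l f
  else keySet l e

/-- A tripath of `q`: a database `Θ`, each of whose blocks has at most two facts,
whose blocks (indexed by `Fin m`) are arranged as a rooted tree with exactly one root
block and exactly two leaf blocks; the root block has the single fact `a(root)`, leaf
blocks have the single fact `b(leaf)`, all other blocks have exactly the two facts
`a(B) ≠ b(B)`; if `B` is the parent of `B'` then `Θ ⊨ q{a(B) b(B')}`; the (unique)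
branching block `B` with its two children `B', B''` gives the center `d e f` =
`b(B') a(B) b(B'')` with `(d,e)` and `(e,f)` distinct solutions; and `g(e)` is not
included in the key of the root fact nor of either leaf fact. -/
structure Tripath (l : ℕ) (q : Query n Var) (Θ : Set (Fin n → Elem)) where
  finite : Θ.Finite
  m : ℕ
  blk : Fin m → Set (Fin n → Elem)
  blk_is_block : ∀ i, ∃ x ∈ Θ, blk i = Block l Θ x
  blk_cover : Θ = ⋃ i, blk i
  blk_inj : Function.Injective blk
  blk_card : ∀ i, (blk i).ncard ≤ 2
  parent : Fin m → Option (Fin m)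
  root : Fin m
  parent_root : parent root = none
  parent_ne_root : ∀ i, i ≠ root → ∃ j, parent i = some j
  reach_root : ∀ i, Relation.ReflTransGen (fun x y => parent x = some y) i root
  leaf1 : Fin m
  leaf2 : Fin m
  leaf_ne : leaf1 ≠ leaf2
  leaf1_leaf : ∀ j, parent j ≠ some leaf1
  leaf2_leaf : ∀ j, parent j ≠ some leaf2
  leaves_eq : ∀ i, (∀ j, parent j ≠ some i) → i = leaf1 ∨ i = leaf2
  aFact : Fin m → (Fin n → Elem)
  bFact : Fin m → (Fin n → Elem)
  root_blk : blk root = {aFact root}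
  leaf1_blk : blk leaf1 = {bFact leaf1}
  leaf2_blk : blk leaf2 = {bFact leaf2}
  other_blk : ∀ i, i ≠ root → i ≠ leaf1 → i ≠ leaf2 →
    aFact i ≠ bFact i ∧ blk i = {aFact i, bFact i}
  adj_sol : ∀ i j, parent j = some i → SolSym q Θ (aFact i) (bFact j)
  branch : Fin m
  child1 : Fin m
  child2 : Fin m
  child_ne : child1 ≠ child2
  parent_child1 : parent child1 = some branch
  parent_child2 : parent child2 = some branch
  center_sol1 : Sol q Θ (bFact child1) (aFact branch)
  center_sol2 : Sol q Θ (aFact branch) (bFact child2)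
  center_distinct : (bFact child1, aFact branch) ≠ (aFact branch, bFact child2)
  g_root : ¬ gSet l (bFact child1) (aFact branch) (bFact child2) ⊆ keySet l (aFact root)
  g_leaf1 : ¬ gSet l (bFact child1) (aFact branch) (bFact child2) ⊆ keySet l (bFact leaf1)
  g_leaf2 : ¬ gSet l (bFact child1) (aFact branch) (bFact child2) ⊆ keySet l (bFact leaf2)

namespace Tripath

variable {l : ℕ} {q : Query n Var} {Θ : Set (Fin n → Elem)}

/-- The fact `d` of the center `def` of a tripath. -/
def dc (T : Tripath l q Θ) : Fin n → Elem := T.bFact T.child1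
/-- The fact `e` of the center `def` of a tripath. -/
def ec (T : Tripath l q Θ) : Fin n → Elem := T.aFact T.branch
/-- The fact `f` of the center `def` of a tripath. -/
def fc (T : Tripath l q Θ) : Fin n → Elem := T.bFact T.child2
/-- The root fact `u₀` of a tripath. -/
def u0 (T : Tripath l q Θ) : Fin n → Elem := T.aFact T.root
/-- The leaf fact `u₁` of a tripath. -/
def u1 (T : Tripath l q Θ) : Fin n → Elem := T.bFact T.leaf1
/-- The leaf fact `u₂` of a tripath. -/
def u2 (T : Tripath l q Θ) : Fin n → Elem := T.bFact T.leaf2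

/-- The center of the tripath is a fork (`(f,d)` is not a solution). -/
def IsFork (T : Tripath l q Θ) : Prop := ¬ Sol q Θ T.fc T.dc

/-- The center of the tripath is a triangle (`(f,d)` is a solution). -/
def IsTriangle (T : Tripath l q Θ) : Prop := Sol q Θ T.fc T.dc

/-- Variable-niceness witnessed by the elements `x, y, z`. -/
def VariableNiceWith (T : Tripath l q Θ) (x y z : Elem) : Prop :=
  x ∈ keySet l T.dc ∧ y ∈ keySet l T.ec ∧ z ∈ keySet l T.fc ∧
  ({x, y, z} : Set Elem) ∩ (keySet l T.u0 ∪ keySet l T.u1 ∪ keySet l T.u2) = ∅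

/-- The tripath is variable-nice. -/
def VariableNice (T : Tripath l q Θ) : Prop := ∃ x y z, T.VariableNiceWith x y z

/-- The tripath is solution-nice: the only solutions to `q` in `Θ` are those between a
parent block and a child block, plus possibly `(f, d)`. -/
def SolutionNice (T : Tripath l q Θ) : Prop :=
  ∀ a b, Sol q Θ a b →
    (∃ i j, T.parent j = some i ∧
      ((a = T.aFact i ∧ b = T.bFact j) ∨ (a = T.bFact j ∧ b = T.aFact i)))
    ∨ (a = T.fc ∧ b = T.dc)

/-- The tripath is nice. -/
def Nice (T : Tripath l q Θ) : Prop :=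
  (∃ x y z : Elem, T.VariableNiceWith x y z ∧
    ∃ w ∈ ({x, y, z} : Set Elem),
      ∀ c ∈ Θ, c ≠ T.u0 → c ≠ T.u1 → c ≠ T.u2 → w ∈ keySet l c) ∧
  T.SolutionNice ∧
  (∀ u ∈ ({T.u0, T.u1, T.u2} : Set (Fin n → Elem)),
    ∃ w ∈ keySet l u, ∀ c ∈ Θ, c ≠ u → w ∉ keySet l c)

end Tripath

/-- `D` contains a tripath of `q`: some subset of `D` is a tripath of `q`. -/
def ContainsTripath (l : ℕ) (q : Query n Var) (D : Set (Fin n → Elem)) : Prop :=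
  ∃ Θ ⊆ D, Nonempty (Tripath l q Θ)

/-- `q` admits a fork-tripath (over databases with elements in `Elem`). -/
def AdmitsForkTripath (l : ℕ) (q : Query n Var) (Elem : Type*) : Prop :=
  ∃ D : Set (Fin n → Elem), D.Finite ∧ ∃ Θ ⊆ D, ∃ T : Tripath l q Θ, T.IsFork

/-- `q` admits a triangle-tripath (over databases with elements in `Elem`). -/
def AdmitsTriangleTripath (l : ℕ) (q : Query n Var) (Elem : Type*) : Prop :=
  ∃ D : Set (Fin n → Elem), D.Finite ∧ ∃ Θ ⊆ D, ∃ T : Tripath l q Θ, T.IsTriangle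

/-- `q` admits a tripath (over databases with elements in `Elem`). -/
def AdmitsTripath (l : ℕ) (q : Query n Var) (Elem : Type*) : Prop :=
  ∃ D : Set (Fin n → Elem), D.Finite ∧ ContainsTripath l q D

/-- Edges of the solution graph `G(D,q)`: distinct facts `a, b` of `D` with `D ⊨ q{ab}`. -/
def gEdge (q : Query n Var) (D : Set (Fin n → Elem)) (a b : Fin n → Elem) : Prop :=
  a ≠ b ∧ a ∈ D ∧ b ∈ D ∧ SolSym q D a b

/-- The connected component of the fact `a` in the solution graph `G(D,q)`. -/
def gComp (q : Query n Var) (D : Set (Fin n → Elem)) (a : Fin n → Elem) :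
    Set (Fin n → Elem) :=
  {b ∈ D | Relation.ReflTransGen (gEdge q D) a b}

/-- `C` is a quasi-clique (of the solution graph of `D`): any two non-key-equal facts of
`C` are joined by an edge. -/
def QuasiClique (l : ℕ) (q : Query n Var) (D : Set (Fin n → Elem))
    (C : Set (Fin n → Elem)) : Prop :=
  ∀ a ∈ C, ∀ b ∈ C, ¬ keyEq l a b → SolSym q D a b

open Classical in
/-- `clique(a)`: the connected component of `a` in `G(D,q)` if it is a quasi-clique, and
`{a}` otherwise. -/
noncomputable def cliqueOf (l : ℕ) (q : Query n Var) (D : Set (Fin n → Elem))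
    (a : Fin n → Elem) : Set (Fin n → Elem) :=
  if QuasiClique l q D (gComp q D a) then gComp q D a else {a}

/-- Edges of the bipartite graph `H(D,q)`: between a block `B` of `D` and a set `c` of
the form `clique(y)`, when `B` contains a fact `a ∈ c` with `(a,a)` not a solution. -/
def HEdge (l : ℕ) (q : Query n Var) (D : Set (Fin n → Elem))
    (B c : Set (Fin n → Elem)) : Prop :=
  (∃ x ∈ D, B = Block l D x) ∧ (∃ y ∈ D, c = cliqueOf l q D y) ∧
  ∃ a ∈ B, a ∈ c ∧ ¬ Sol q D a a

/-- `H(D,q)` admits a matching saturating the set `V₁` of blocks of `D`: an injective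
assignment of an `H`-edge to every block. -/
def SaturatingMatching (l : ℕ) (q : Query n Var) (D : Set (Fin n → Elem)) : Prop :=
  ∃ M : Set (Fin n → Elem) → Set (Fin n → Elem),
    (∀ x ∈ D, HEdge l q D (Block l D x) (M (Block l D x))) ∧
    (∀ x ∈ D, ∀ y ∈ D, M (Block l D x) = M (Block l D y) → Block l D x = Block l D y)

/-- `D` is a clique-database for `q`: every connected component of `G(D,q)` is a
quasi-clique. -/
def CliqueDB (l : ℕ) (q : Query n Var) (D : Set (Fin n → Elem)) : Prop :=
  ∀ a ∈ D, QuasiClique l q D (gComp q D a)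

/-- `q` is a clique-query: every database (over `Elem`) is a clique-database for `q`. -/
def CliqueQuery (l : ℕ) (q : Query n Var) (Elem : Type*) : Prop :=
  ∀ D : Set (Fin n → Elem), D.Finite → CliqueDB l q D

/-- One step of `q`-connectedness between (the blocks of) two facts of `D`:
either they are in the same block, or some fact of the block of `x` and some fact
of the block of `y` form a solution. -/
def qConnRel (l : ℕ) (q : Query n Var) (D : Set (Fin n → Elem))
    (x y : Fin n → Elem) : Prop :=
  keyEq l x y ∨ ∃ a b, a ∈ Block l D x ∧ b ∈ Block l D y ∧ SolSym q D a b

/-- The blocks of `x` and of `y` are `q`-connected in `D`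
(reflexive-symmetric-transitive closure). -/
def qConn (l : ℕ) (q : Query n Var) (D : Set (Fin n → Elem))
    (x y : Fin n → Elem) : Prop :=
  Relation.EqvGen (qConnRel l q D) x y

/-- The `q`-connected component of (the block of) the fact `x` in `D`. -/
def qComponent (l : ℕ) (q : Query n Var) (D : Set (Fin n → Elem))
    (x : Fin n → Elem) : Set (Fin n → Elem) :=
  {y ∈ D | qConn l q D x y}

end CQA

/-!
Soundness holds for every `k`: the sets `S` such that every repair containing `S` satisfies `q`
form a collection closed under the two rules, hence containing `Δ_k(q,D)`.

For completeness assume `∅ ∉ Δ₂` and call a set `Δ`-free if none of its `2`-subsets lies in `Δ₂`.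
Rule (ii) says exactly that a `Δ`-free `2`-set `S` can be extended by a fact `u` of any block
with `S ∪ {u}` still `Δ`-free, and by rule (i) a `Δ`-free set contains no solution of `q` inside
any consistent pair. We build a repair without solutions.

If `vars(A) ∩ vars(B) ⊆ key(B)`, a solution `(a, b)` stays a solution when `b` is replaced by a
key-equal fact that is an instance of `B`. Choose in each block a fact `u` with `{u} ∉ Δ₂`,
preferring one that is no instance of `B`; a solution `(a, b)` among the chosen facts would put
`{a}` into `Δ₂` by rule (ii) applied to the block of `b`.

If `key(A) ⊆ key(B)`, the block of `b` determines the block of `a` in a solution `(a, b)`: every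
block has at most one parent. A block without children among the remaining ones is filled last,
`Δ`-free together with the fact chosen in its parent. If every block has a child, the blocks form
the cycles of a permutation; pinning a `Δ`-free fact `w` in one block of a cycle and keeping every
choice along the cycle `Δ`-free together with `w` closes the cycle without a solution.
-/

namespace CQA

variable {n : ℕ} {Elem Var : Type*}

section Keys

variable {α : Type*} {l : ℕ}

def key (l : ℕ) (t : Fin n → α) : {i : Fin n // (i : ℕ) < l} → α := fun i => t i

theorem keyEq_iff {s t : Fin n → α} : keyEq l s t ↔ key l s = key l t :=
  ⟨fun h => funext fun i => h i i.2, fun h i hi => congrFun h ⟨i, hi⟩⟩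

end Keys

variable {l k : ℕ} {q : Query n Var} {D S R P : Set (Fin n → Elem)}
  {a a' b b' w x : Fin n → Elem}

theorem kSet_of_subsingleton (hSD : S ⊆ D) (hS : S.Subsingleton) : kSet l 2 D S :=
  ⟨hSD, hS.finite, ((Set.ncard_le_one_iff hS.finite).2 fun ha hb => hS ha hb).trans (by norm_num),
    fun _ ha _ hb _ => hS ha hb⟩

theorem kSet_singleton (ha : a ∈ D) : kSet l 2 D {a} :=
  kSet_of_subsingleton (Set.singleton_subset_iff.2 ha) Set.subsingleton_singleton

theorem kSet_insert (ha : a ∈ D) (hSD : S ⊆ D) (hS : S.Subsingleton)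
    (hkey : ∀ s ∈ S, key l s = key l a → s = a) : kSet l 2 D (insert a S) := by
  refine ⟨Set.insert_subset ha hSD, hS.finite.insert a, ?_, ?_⟩
  · calc (insert a S).ncard ≤ S.ncard + 1 := Set.ncard_insert_le a S
      _ ≤ 1 + 1 := by gcongr; exact (Set.ncard_le_one_iff hS.finite).2 fun hs ht => hS hs ht
  · rintro s (rfl | hs) t (rfl | ht) hst
    · rfl
    · exact (hkey t ht (keyEq_iff.1 hst).symm).symm
    · exact hkey s hs (keyEq_iff.1 hst)
    · exact hS hs ht

theorem delta_subset {𝒮 : Set (Set (Fin n → Elem))} (h : DeltaClosed l k q D 𝒮) :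
    Delta l k q D ⊆ 𝒮 :=
  Set.sInter_subset_of_mem h

theorem mem_delta_of_sat (hS : kSet l k D S) (h : Sat q S) : S ∈ Delta l k q D :=
  fun _ h𝒮 => h𝒮.1 S hS h

theorem mem_delta_of_block (hS : kSet l k D S) (hx : x ∈ D)
    (h : ∀ u ∈ D, keyEq l x u → ∃ S' ⊆ S ∪ {u}, kSet l k D S' ∧ S' ∈ Delta l k q D) :
    S ∈ Delta l k q D := fun 𝒮 h𝒮 =>
  h𝒮.2 S hS ⟨x, hx, fun u hu hxu =>
    let ⟨S', hS'u, hS', hS'Δ⟩ := h u hu hxu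
    ⟨S', hS'u, hS', hS'Δ 𝒮 h𝒮⟩⟩

theorem Repair.exists_keyEq (hR : Repair l D R) (hx : x ∈ D) : ∃ u ∈ R, keyEq l x u := by
  by_contra! h
  have hcons : Consistent l (insert x R) := by
    rintro a (rfl | ha) b (rfl | hb) hab
    · rfl
    · exact absurd hab (h b hb)
    · exact absurd (keyEq_iff.2 (keyEq_iff.1 hab).symm) (h a ha)
    · exact hR.2.1 a ha b hb hab
  have hxR := hR.2.2 _ (Set.subset_insert x R) (Set.insert_subset hx hR.1) hcons
  exact h x (hxR ▸ Set.mem_insert x R) fun _ _ => rfl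

theorem certain_of_empty_mem_delta (h : ∅ ∈ Delta l k q D) : Certain l q D := by
  have hclosed : DeltaClosed l k q D {S | ∀ R, Repair l D R → S ⊆ R → Sat q R} := by
    refine ⟨fun S _ ⟨a, b, ha, hb, hab⟩ R _ hSR => ⟨a, b, hSR ha, hSR hb, hab⟩, ?_⟩
    rintro S - ⟨x, hx, hblock⟩ R hR hSR
    obtain ⟨u, huR, hxu⟩ := hR.exists_keyEq hx
    obtain ⟨S', hS'u, -, hS'⟩ := hblock u (hR.1 huR) hxu
    exact hS' R hR (hS'u.trans (Set.union_subset hSR (Set.singleton_subset_iff.2 huR)))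
  exact fun R hR => delta_subset hclosed h R hR (Set.empty_subset R)

theorem repair_of_key_image_subset (hRD : R ⊆ D) (hR : Consistent l R)
    (hkeys : key l '' D ⊆ key l '' R) : Repair l D R := by
  refine ⟨hRD, hR, fun T hRT hTD hT => (Set.Subset.antisymm ?_ hRT)⟩
  intro v hv
  obtain ⟨r, hr, hrv⟩ := hkeys ⟨v, hTD hv, rfl⟩
  rwa [← hT r (hRT hr) v hv (keyEq_iff.2 hrv)]

def DeltaFree (l : ℕ) (q : Query n Var) (D S : Set (Fin n → Elem)) : Prop :=
  ∀ S' ⊆ S, kSet l 2 D S' → S' ∉ Delta l 2 q D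

theorem DeltaFree.mono {T : Set (Fin n → Elem)} (h : DeltaFree l q D T) (hST : S ⊆ T) :
    DeltaFree l q D S :=
  fun S' hS' => h S' (hS'.trans hST)

theorem DeltaFree.not_solPair (h : DeltaFree l q D S) (hSD : S ⊆ D) (ha : a ∈ S) (hb : b ∈ S)
    (hab : key l a = key l b → a = b) : ¬ solPair q a b := fun hsol =>
  have hk : kSet l 2 D {a, b} := kSet_insert (hSD ha) (by simpa using hSD hb)
    Set.subsingleton_singleton (by rintro _ rfl h; exact (hab h.symm).symm)
  h _ (Set.insert_subset ha (Set.singleton_subset_iff.2 hb)) hk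
    (mem_delta_of_sat hk ⟨a, b, Set.mem_insert a _, Set.mem_insert_of_mem a rfl, hsol⟩)

theorem exists_deltaFree_insert (hS : kSet l 2 D S) (hSΔ : S ∉ Delta l 2 q D) (hx : x ∈ D) :
    ∃ u ∈ D, keyEq l x u ∧ DeltaFree l q D (insert u S) := by
  by_contra! h
  refine hSΔ (mem_delta_of_block hS hx fun u hu hxu => ?_)
  simpa [DeltaFree, Set.union_singleton] using h u hu hxu

theorem deltaFree_empty (hΔ : ∅ ∉ Delta l 2 q D) : DeltaFree l q D ∅ :=
  fun _ hS _ => Set.subset_empty_iff.1 hS ▸ hΔ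

theorem exists_deltaFree_singleton (hΔ : ∅ ∉ Delta l 2 q D) (hx : x ∈ D) :
    ∃ u ∈ D, key l u = key l x ∧ DeltaFree l q D {u} := by
  obtain ⟨u, huD, hxu, hu⟩ := exists_deltaFree_insert
    (kSet_of_subsingleton (Set.empty_subset D) Set.subsingleton_empty) hΔ hx
  exact ⟨u, huD, (keyEq_iff.1 hxu).symm, by simpa using hu⟩

def Matches (B : Fin n → Var) (b : Fin n → Elem) : Prop :=
  ∀ i j, B i = B j → b i = b j

theorem matches_of_solPair (h : solPair q a b) : Matches q.2 b := by
  obtain ⟨μ, -, hB⟩ := h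
  intro i j hij
  rw [← hB i, ← hB j, hij]

theorem solPair_of_key_eq_of_matches (hq : varsSet q.1 ∩ varsSet q.2 ⊆ keySet l q.2)
    (hab : solPair q a b) (hbb' : key l b = key l b') (hb' : Matches q.2 b') :
    solPair q a b' := by
  classical
  obtain ⟨μ, hA, hB⟩ := hab
  -- Read the variables of `B` off `b'`; a variable shared with `A` sits in a key position
  -- of `B`, where `b'` agrees with `b`.
  refine ⟨fun v => if h : ∃ j, q.2 j = v then b' h.choose else μ v, fun i => ?_, fun j => ?_⟩
  · dsimp only
    split_ifs with h
    · obtain ⟨j, hjl, hj⟩ := hq ⟨⟨i, rfl⟩, h⟩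
      calc b' h.choose = b' j := hb' _ _ (h.choose_spec.trans hj.symm)
        _ = b j := (congrFun hbb' ⟨j, hjl⟩).symm
        _ = a i := by rw [← hB j, hj, hA]
    · exact hA i
  · have h : ∃ j', q.2 j' = q.2 j := ⟨j, rfl⟩
    dsimp only
    rw [dif_pos h]
    exact hb' _ _ h.choose_spec

theorem singleton_mem_delta_of_solPair (hq : varsSet q.1 ∩ varsSet q.2 ⊆ keySet l q.2)
    (ha : a ∈ D) (hb : b ∈ D) (hab : solPair q a b) (hkey : key l a = key l b → a = b)
    (hblock : ∀ u ∈ D, key l u = key l b → DeltaFree l q D {u} → Matches q.2 u) :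
    {a} ∈ Delta l 2 q D := by
  by_cases hab' : key l a = key l b
  · obtain rfl := hkey hab'
    exact mem_delta_of_sat (kSet_singleton ha) ⟨a, a, rfl, rfl, hab⟩
  refine mem_delta_of_block (kSet_singleton ha) hb fun u huD hu => ?_
  rw [keyEq_iff] at hu
  by_cases hm : Matches q.2 u
  · have hk : kSet l 2 D {a, u} := kSet_insert ha (Set.singleton_subset_iff.2 huD)
      Set.subsingleton_singleton (by rintro _ rfl h; exact absurd (h.symm.trans hu.symm) hab')
    exact ⟨{a, u}, (Set.insert_eq _ _).le, hk, mem_delta_of_sat hk ⟨_, _,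
      Set.mem_insert _ _, Set.mem_insert_of_mem _ rfl, solPair_of_key_eq_of_matches hq hab hu hm⟩⟩
  · have hu' : ¬ DeltaFree l q D {u} := fun h => hm (hblock u huD hu.symm h)
    simp only [DeltaFree] at hu'
    push Not at hu'
    obtain ⟨S', hS'u, hS', hS'Δ⟩ := hu'
    exact ⟨S', hS'u.trans Set.subset_union_right, hS', hS'Δ⟩

theorem not_certain_of_varsSet_inter_subset (hq : varsSet q.1 ∩ varsSet q.2 ⊆ keySet l q.2)
    (hΔ : ∅ ∉ Delta l 2 q D) : ¬ Certain l q D := by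
  -- In each block pick `u` with `{u} ∉ Δ₂`, preferring one that is not an instance of `B`.
  have hpick : ∀ k : key l '' D, ∃ u ∈ D, key l u = k ∧ DeltaFree l q D {u} ∧
      (Matches q.2 u → ∀ v ∈ D, key l v = k → DeltaFree l q D {v} → Matches q.2 v) := by
    rintro ⟨_, x, hxD, rfl⟩
    by_cases hv : ∃ v ∈ D, key l v = key l x ∧ DeltaFree l q D {v} ∧ ¬ Matches q.2 v
    · obtain ⟨v, hvD, hvx, hv, hvm⟩ := hv
      exact ⟨v, hvD, hvx, hv, fun h => absurd h hvm⟩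
    · push Not at hv
      obtain ⟨u, huD, hux, hu⟩ := exists_deltaFree_singleton hΔ hxD
      exact ⟨u, huD, hux, hu, fun _ => hv⟩
  choose c hcD hck hcΔ hcpref using hpick
  have hc_inj : ∀ k k', key l (c k) = key l (c k') → c k = c k' := fun k k' h =>
    congrArg c (Subtype.ext ((hck k).symm.trans (h.trans (hck k'))))
  intro hcert
  obtain ⟨_, _, ⟨k, rfl⟩, ⟨k', rfl⟩, hsol⟩ := hcert (Set.range c) <|
    repair_of_key_image_subset (Set.range_subset_iff.2 hcD)
      (by rintro _ ⟨k, rfl⟩ _ ⟨k', rfl⟩ h; exact hc_inj k k' (keyEq_iff.1 h))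
      (by rintro _ ⟨x, hxD, rfl⟩; exact ⟨_, ⟨⟨_, x, hxD, rfl⟩, rfl⟩, hck _⟩)
  refine hcΔ k {c k} subset_rfl (kSet_singleton (hcD k)) <|
    singleton_mem_delta_of_solPair hq (hcD k) (hcD k') hsol (hc_inj k k') ?_
  rw [hck k']
  exact hcpref k' (matches_of_solPair hsol)

section Graph

variable {β : Type*} {E : β → β → Prop}

def AcyclicOn (E : β → β → Prop) (V : Finset β) : Prop :=
  ∀ W ⊆ V, W.Nonempty → ∃ y ∈ W, ∀ k ∈ W, ¬ E y k

theorem AcyclicOn.mono {V W : Finset β} (h : AcyclicOn E V) (hWV : W ⊆ V) : AcyclicOn E W :=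
  fun U hU => h U (hU.trans hWV)

theorem exists_cycle [DecidableEq β] (huniq : ∀ ⦃i j k⦄, E i k → E j k → i = j)
    {κ : Finset β} (hne : κ.Nonempty) (hsucc : ∀ y ∈ κ, ∃ k ∈ κ, E y k) :
    ∃ C ⊆ κ, C.Nonempty ∧ (∀ j ∈ C, ∀ k ∈ κ, E j k → k ∈ C) ∧
      (∀ k ∈ C, ∀ j ∈ κ, E j k → j ∈ C) ∧ ∀ X ∈ C, AcyclicOn E (C.erase X) := by
  -- A successor map `g` is injective on `κ`, hence a permutation of `κ`, and a minimal
  -- nonempty `g`-invariant subset of `κ` is a single cycle of it.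
  have : ∀ y, ∃ k, y ∈ κ → k ∈ κ ∧ E y k := fun y => by
    by_cases hy : y ∈ κ
    · obtain ⟨k, hk, hE⟩ := hsucc y hy
      exact ⟨k, fun _ => ⟨hk, hE⟩⟩
    · exact ⟨y, fun h => absurd h hy⟩
  choose g hg using this
  have hsurj : ∀ C ⊆ κ, (∀ j ∈ C, g j ∈ C) → ∀ k ∈ C, ∃ j ∈ C, g j = k := fun C hC hgC =>
    Finset.surjOn_of_injOn_of_card_le g (fun j hj => hgC j hj)
      (fun i hi j hj h => huniq (hg i (hC hi)).2 (h ▸ (hg j (hC hj)).2)) le_rfl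
  have hedge : ∀ j ∈ κ, ∀ k ∈ κ, E j k → k = g j := by
    intro j hj k hk hE
    obtain ⟨i, hi, rfl⟩ := hsurj κ subset_rfl (fun i hi => (hg i hi).1) k hk
    rw [huniq hE (hg i hi).2]
  obtain ⟨C, hC, hmin⟩ := Finset.exists_min_image
    (κ.powerset.filter fun C => C.Nonempty ∧ ∀ j ∈ C, g j ∈ C) Finset.card
    ⟨κ, by simpa using ⟨hne, fun j hj => (hg j hj).1⟩⟩
  simp only [Finset.mem_filter, Finset.mem_powerset] at hC hmin
  obtain ⟨hCκ, hCne, hgC⟩ := hC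
  refine ⟨C, hCκ, hCne, fun j hj k hk hE => hedge j (hCκ hj) k hk hE ▸ hgC j hj,
    fun k hk j hj hE => ?_, fun X hX W hW hWne => ?_⟩
  · obtain ⟨i, hi, rfl⟩ := hsurj C hCκ hgC k hk
    rwa [huniq hE (hg i (hCκ hi)).2]
  · have hWκ : W ⊆ κ := hW.trans ((Finset.erase_subset X C).trans hCκ)
    by_contra! hcyc
    have hgW : ∀ j ∈ W, g j ∈ W := fun j hj => by
      obtain ⟨k, hk, hE⟩ := hcyc j hj
      rwa [← hedge j (hWκ hj) k (hWκ hk) hE]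
    have := (hmin W ⟨hWκ, hWne, hgW⟩).trans (Finset.card_le_card hW)
    exact absurd (Finset.card_erase_lt_of_mem hX) this.not_gt

end Graph

section KeySubset

open Classical

variable {κ : Finset ({i : Fin n // (i : ℕ) < l} → Elem)}

def Edge (l : ℕ) (q : Query n Var) (D : Set (Fin n → Elem))
    (j k : {i : Fin n // (i : ℕ) < l} → Elem) : Prop :=
  ∃ a b, Sol q D a b ∧ key l a = j ∧ key l b = k

theorem key_eq_of_solPair (hq : keySet l q.1 ⊆ keySet l q.2) (hab : solPair q a b)
    (hab' : solPair q a' b') (hbb' : key l b = key l b') : key l a = key l a' := by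
  obtain ⟨μ, hA, hB⟩ := hab
  obtain ⟨ν, hA', hB'⟩ := hab'
  funext ⟨i, hi⟩
  obtain ⟨j, hjl, hj⟩ := hq ⟨i, hi, rfl⟩
  calc a i = b j := by rw [← hA, ← hj, hB]
    _ = b' j := congrFun hbb' ⟨j, hjl⟩
    _ = a' i := by rw [← hA', ← hj, hB']

theorem edge_unique (hq : keySet l q.1 ⊆ keySet l q.2) :
    ∀ ⦃i j k⦄, Edge l q D i k → Edge l q D j k → i = j := by
  intro i j k hi hj
  obtain ⟨a, b, ⟨-, -, hab⟩, rfl, rfl⟩ := hi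
  obtain ⟨a', b', ⟨-, -, hab'⟩, rfl, hb'⟩ := hj
  exact key_eq_of_solPair hq hab hab' hb'.symm

-- `P` is empty or holds the fact pinned in one block of a cycle.
structure SafeSelection (l : ℕ) (q : Query n Var) (D P : Set (Fin n → Elem))
    (κ : Finset ({i : Fin n // (i : ℕ) < l} → Elem)) (R : Set (Fin n → Elem)) : Prop where
  subset : R ⊆ D
  consistent : Consistent l R
  keys : key l '' R = κ
  deltaFree : ∀ r ∈ R, DeltaFree l q D (insert r P)
  not_solPair : ∀ r ∈ R, ∀ r' ∈ R, ¬ solPair q r r'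

namespace SafeSelection

theorem empty : SafeSelection l q D P ∅ ∅ :=
  ⟨Set.empty_subset D, fun _ h => h.elim, by simp, fun _ h => h.elim, fun _ h => h.elim⟩

theorem key_mem (hR : SafeSelection l q D P κ R) {r : Fin n → Elem} (hr : r ∈ R) :
    key l r ∈ κ := by
  rw [← Finset.mem_coe, ← hR.keys]
  exact ⟨r, hr, rfl⟩

theorem exists_kSet_parent (hq : keySet l q.1 ⊆ keySet l q.2) (hR : SafeSelection l q D P κ R)
    (hPD : P ⊆ D) (hP : P.Subsingleton) (hPΔ : DeltaFree l q D P) (hPκ : ∀ p ∈ P, key l p ∉ κ)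
    (y : {i : Fin n // (i : ℕ) < l} → Elem) :
    ∃ S, kSet l 2 D S ∧ S ∉ Delta l 2 q D ∧ P ⊆ S ∧ ∀ r ∈ R, Edge l q D (key l r) y → r ∈ S := by
  by_cases h : ∃ r ∈ R, Edge l q D (key l r) y
  · obtain ⟨r₀, hr₀, hE₀⟩ := h
    have hS : kSet l 2 D (insert r₀ P) := kSet_insert (hR.subset hr₀) hPD hP
      fun p hp hpr => absurd (hpr ▸ hR.key_mem hr₀) (hPκ p hp)
    refine ⟨_, hS, hR.deltaFree r₀ hr₀ _ subset_rfl hS, Set.subset_insert _ _, fun r hr hE => ?_⟩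
    rw [hR.consistent r hr r₀ hr₀ (keyEq_iff.2 (edge_unique hq hE hE₀))]
    exact Set.mem_insert _ _
  · have hS := kSet_of_subsingleton (l := l) hPD hP
    exact ⟨P, hS, hPΔ P subset_rfl hS, subset_rfl, fun r hr hE => absurd ⟨r, hr, hE⟩ h⟩

theorem exists_of_erase (hq : keySet l q.1 ⊆ keySet l q.2)
    (hR : SafeSelection l q D P (κ.erase (key l x)) R) (hPD : P ⊆ D) (hP : P.Subsingleton)
    (hPΔ : DeltaFree l q D P) (hPκ : ∀ p ∈ P, key l p ∉ κ) (hx : x ∈ D) (hxκ : key l x ∈ κ)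
    (hchild : ∀ k ∈ κ, ¬ Edge l q D (key l x) k) : ∃ R', SafeSelection l q D P κ R' := by
  have hRκ : ∀ r ∈ R, key l r ∈ κ := fun r hr => Finset.mem_of_mem_erase (hR.key_mem hr)
  have hRx : ∀ r ∈ R, key l r ≠ key l x := fun r hr => Finset.ne_of_mem_erase (hR.key_mem hr)
  obtain ⟨S, hS, hSΔ, hPS, hparent⟩ := hR.exists_kSet_parent hq hPD hP hPΔ
    (fun p hp h => hPκ p hp (Finset.mem_of_mem_erase h)) (key l x)
  obtain ⟨u, huD, hxu, hu⟩ := exists_deltaFree_insert hS hSΔ hx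
  rw [keyEq_iff] at hxu
  have huSD : insert u S ⊆ D := Set.insert_subset huD hS.1
  refine ⟨insert u R, ⟨Set.insert_subset huD hR.subset, ?_, ?_, ?_, ?_⟩⟩
  · rintro r (rfl | hr) r' (rfl | hr') h
    · rfl
    · exact absurd (hxu.trans (keyEq_iff.1 h)).symm (hRx r' hr')
    · exact absurd ((keyEq_iff.1 h).trans hxu.symm) (hRx r hr)
    · exact hR.consistent r hr r' hr' h
  · rw [Set.image_insert_eq, hR.keys, ← Finset.coe_insert, ← hxu, Finset.insert_erase hxκ]
  · rintro r (rfl | hr)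
    · exact hu.mono (Set.insert_subset_insert hPS)
    · exact hR.deltaFree r hr
  · rintro r (rfl | hr) r' (rfl | hr') hsol
    · exact hu.not_solPair huSD (Set.mem_insert _ _) (Set.mem_insert _ _) (fun _ => rfl) hsol
    · exact hchild _ (hRκ r' hr') ⟨_, _, ⟨huD, hR.subset hr', hsol⟩, hxu.symm, rfl⟩
    · exact hu.not_solPair huSD
        (Set.mem_insert_of_mem _ (hparent r hr ⟨_, _, ⟨hR.subset hr, huD, hsol⟩, rfl, hxu.symm⟩))
        (Set.mem_insert _ _) (fun h => absurd (h.trans hxu.symm) (hRx r hr)) hsol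
    · exact hR.not_solPair r hr r' hr' hsol

theorem insert_pin (hR : SafeSelection l q D {w} κ R) (hw : w ∈ D)
    (hwΔ : DeltaFree l q D {w}) (hwκ : key l w ∉ κ) :
    SafeSelection l q D ∅ (insert (key l w) κ) (insert w R) := by
  have hRw : ∀ r ∈ R, key l r ≠ key l w := fun r hr h => hwκ (h ▸ hR.key_mem hr)
  have hwR : ∀ r ∈ R, ¬ solPair q w r ∧ ¬ solPair q r w := fun r hr =>
    have hD : insert r {w} ⊆ D := Set.insert_subset (hR.subset hr) (by simpa using hw)
    ⟨(hR.deltaFree r hr).not_solPair hD (Set.mem_insert_of_mem _ rfl) (Set.mem_insert _ _)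
        fun h => absurd h.symm (hRw r hr),
      (hR.deltaFree r hr).not_solPair hD (Set.mem_insert _ _) (Set.mem_insert_of_mem _ rfl)
        fun h => absurd h (hRw r hr)⟩
  refine ⟨Set.insert_subset hw hR.subset, ?_, ?_, ?_, ?_⟩
  · rintro r (rfl | hr) r' (rfl | hr') h
    · rfl
    · exact absurd (keyEq_iff.1 h).symm (hRw r' hr')
    · exact absurd (keyEq_iff.1 h) (hRw r hr)
    · exact hR.consistent r hr r' hr' h
  · rw [Set.image_insert_eq, hR.keys, Finset.coe_insert]
  · rintro r (rfl | hr)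
    · simpa using hwΔ
    · exact (hR.deltaFree r hr).mono (Set.insert_subset_insert (Set.empty_subset _))
  · rintro r (rfl | hr) r' (rfl | hr') hsol
    · exact hwΔ.not_solPair (by simpa using hw) rfl rfl (fun _ => rfl) hsol
    · exact (hwR r' hr').1 hsol
    · exact (hwR r hr).2 hsol
    · exact hR.not_solPair r hr r' hr' hsol

theorem union {κ₁ κ₂ : Finset ({i : Fin n // (i : ℕ) < l} → Elem)} {R₁ R₂ : Set (Fin n → Elem)}
    (h₁ : SafeSelection l q D P κ₁ R₁) (h₂ : SafeSelection l q D P κ₂ R₂)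
    (hdisj : Disjoint κ₁ κ₂) (h₁₂ : ∀ j ∈ κ₁, ∀ k ∈ κ₂, ¬ Edge l q D j k)
    (h₂₁ : ∀ j ∈ κ₂, ∀ k ∈ κ₁, ¬ Edge l q D j k) :
    SafeSelection l q D P (κ₁ ∪ κ₂) (R₁ ∪ R₂) := by
  refine ⟨Set.union_subset h₁.subset h₂.subset, ?_, ?_, ?_, ?_⟩
  · rintro r (hr | hr) r' (hr' | hr') h
    · exact h₁.consistent r hr r' hr' h
    · exact absurd (keyEq_iff.1 h ▸ h₁.key_mem hr) (Finset.disjoint_right.1 hdisj (h₂.key_mem hr'))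
    · exact absurd (keyEq_iff.1 h ▸ h₂.key_mem hr) (Finset.disjoint_left.1 hdisj (h₁.key_mem hr'))
    · exact h₂.consistent r hr r' hr' h
  · rw [Set.image_union, h₁.keys, h₂.keys, Finset.coe_union]
  · rintro r (hr | hr)
    · exact h₁.deltaFree r hr
    · exact h₂.deltaFree r hr
  · rintro r (hr | hr) r' (hr' | hr') hsol
    · exact h₁.not_solPair r hr r' hr' hsol
    · exact h₁₂ _ (h₁.key_mem hr) _ (h₂.key_mem hr')
        ⟨r, r', ⟨h₁.subset hr, h₂.subset hr', hsol⟩, rfl, rfl⟩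
    · exact h₂₁ _ (h₂.key_mem hr) _ (h₁.key_mem hr')
        ⟨r, r', ⟨h₂.subset hr, h₁.subset hr', hsol⟩, rfl, rfl⟩
    · exact h₂.not_solPair r hr r' hr' hsol

end SafeSelection

theorem exists_safeSelection_of_acyclicOn (hq : keySet l q.1 ⊆ keySet l q.2) (hPD : P ⊆ D)
    (hP : P.Subsingleton) (hPΔ : DeltaFree l q D P)
    (κ : Finset ({i : Fin n // (i : ℕ) < l} → Elem)) (hκD : ↑κ ⊆ key l '' D)
    (hPκ : ∀ p ∈ P, key l p ∉ κ) (hκ : AcyclicOn (Edge l q D) κ) :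
    ∃ R, SafeSelection l q D P κ R := by
  induction κ using Finset.strongInduction with
  | H κ ih =>
  rcases κ.eq_empty_or_nonempty with rfl | hne
  · exact ⟨∅, SafeSelection.empty⟩
  obtain ⟨_, hy, hchild⟩ := hκ κ subset_rfl hne
  obtain ⟨x, hx, rfl⟩ := hκD hy
  obtain ⟨R, hR⟩ := ih _ (Finset.erase_ssubset hy)
    ((Finset.coe_subset.2 (Finset.erase_subset _ _)).trans hκD)
    (fun p hp h => hPκ p hp (Finset.mem_of_mem_erase h)) (hκ.mono (Finset.erase_subset _ _))
  exact hR.exists_of_erase hq hPD hP hPΔ hPκ hx hy hchild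

theorem exists_safeSelection (hq : keySet l q.1 ⊆ keySet l q.2) (hΔ : ∅ ∉ Delta l 2 q D)
    (κ : Finset ({i : Fin n // (i : ℕ) < l} → Elem)) (hκD : ↑κ ⊆ key l '' D) :
    ∃ R, SafeSelection l q D ∅ κ R := by
  induction κ using Finset.strongInduction with
  | H κ ih =>
  rcases κ.eq_empty_or_nonempty with rfl | hne
  · exact ⟨∅, SafeSelection.empty⟩
  by_cases hleaf : ∃ y ∈ κ, ∀ k ∈ κ, ¬ Edge l q D y k
  · obtain ⟨_, hy, hchild⟩ := hleaf
    obtain ⟨x, hx, rfl⟩ := hκD hy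
    obtain ⟨R, hR⟩ := ih _ (Finset.erase_ssubset hy)
      ((Finset.coe_subset.2 (Finset.erase_subset _ _)).trans hκD)
    exact hR.exists_of_erase hq (Set.empty_subset D) Set.subsingleton_empty
      (deltaFree_empty hΔ) (fun _ h => h.elim) hx hy hchild
  push Not at hleaf
  obtain ⟨C, hCκ, ⟨_, hX⟩, hout, hin, hacyc⟩ := exists_cycle (edge_unique hq) hne hleaf
  obtain ⟨x, hx, rfl⟩ := hκD (hCκ hX)
  -- Pinning a fact `w` of one block of the cycle turns the rest of the cycle into a path.
  obtain ⟨w, hwD, hwx, hw⟩ := exists_deltaFree_singleton hΔ hx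
  have hwC : key l w ∉ C.erase (key l x) := hwx ▸ Finset.notMem_erase _ _
  obtain ⟨R₁, hR₁⟩ := exists_safeSelection_of_acyclicOn hq (Set.singleton_subset_iff.2 hwD)
    Set.subsingleton_singleton hw (C.erase (key l x))
    ((Finset.coe_subset.2 ((Finset.erase_subset _ _).trans hCκ)).trans hκD)
    (by rintro p rfl; exact hwC) (hacyc _ hX)
  have hcycle := hR₁.insert_pin hwD hw hwC
  rw [hwx, Finset.insert_erase hX] at hcycle
  obtain ⟨R₀, hR₀⟩ := ih _ (Finset.sdiff_ssubset hCκ ⟨_, hX⟩)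
    ((Finset.coe_subset.2 Finset.sdiff_subset).trans hκD)
  have := hR₀.union hcycle Finset.sdiff_disjoint
    (fun j hj k hk hE => (Finset.mem_sdiff.1 hj).2 (hin k hk j (Finset.mem_sdiff.1 hj).1 hE))
    (fun j hj k hk hE => (Finset.mem_sdiff.1 hk).2 (hout j hj k (Finset.mem_sdiff.1 hk).1 hE))
  rw [Finset.sdiff_union_of_subset hCκ] at this
  exact ⟨_, this⟩

theorem not_certain_of_keySet_subset (hq : keySet l q.1 ⊆ keySet l q.2) (hD : D.Finite)
    (hΔ : ∅ ∉ Delta l 2 q D) : ¬ Certain l q D := by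
  obtain ⟨R, hR⟩ := exists_safeSelection hq hΔ (hD.image (key l)).toFinset (by simp)
  intro hcert
  obtain ⟨a, b, ha, hb, hab⟩ := hcert R <|
    repair_of_key_image_subset hR.subset hR.consistent (by simp [hR.keys])
  exact hR.not_solPair a ha b hb hab

end KeySubset

end CQA

theorem certain_eq_delta_two_general (n l : ℕ)
    (Elem Var : Type)
    (q : CQA.Query n Var)
    (hq : CQA.keySet l q.1 ⊆ CQA.keySet l q.2 ∨
          CQA.varsSet q.1 ∩ CQA.varsSet q.2 ⊆ CQA.keySet l q.2)
    (D : Set (Fin n → Elem)) (hD : D.Finite) :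
    CQA.Certain l q D ↔ ∅ ∈ CQA.Delta l 2 q D := by
  refine ⟨fun hcert => ?_, CQA.certain_of_empty_mem_delta⟩
  by_contra hΔ
  rcases hq with hq | hq
  · exact CQA.not_certain_of_keySet_subset hq hD hΔ hcert
  · exact CQA.not_certain_of_varsSet_inter_subset hq hΔ hcert

/-- if `key(A) ⊆ key(B)` or `vars(A) ∩ vars(B) ⊆ key(B)` then
`certain(q)` coincides with the greedy fixpoint algorithm for `k = 2`. -/
theorem certain_eq_delta_two (n l : ℕ) (hn : 1 ≤ n) (hl : l ≤ n)
    (Elem Var : Type) [Countable Elem] [Infinite Elem] [Countable Var] [Infinite Var]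
    (q : CQA.Query n Var)
    (hq : CQA.keySet l q.1 ⊆ CQA.keySet l q.2 ∨
          CQA.varsSet q.1 ∩ CQA.varsSet q.2 ⊆ CQA.keySet l q.2)
    (D : Set (Fin n → Elem)) (hD : D.Finite) :
    CQA.Certain l q D ↔ ∅ ∈ CQA.Delta l 2 q D :=
  certain_eq_delta_two_general n l Elem Var q hq D hD
end

section
/- Let q be a 2way-determined query and D a database. If the bipartite graph H(D,q) admits no matching saturating the set of blocks of D, then D ⊨ certain(q). -/
namespace CQA

variable {n l : ℕ} {Elem Var : Type*} {q : Query n Var} {D r : Set (Fin n → Elem)}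
  {a b c x y : Fin n → Elem}

theorem keyEq_refl (t : Fin n → Elem) : keyEq l t t := fun _ _ => rfl

theorem keyEq.symm (h : keyEq l a b) : keyEq l b a := fun i hi => (h i hi).symm

theorem keyEq.trans (h₁ : keyEq l a b) (h₂ : keyEq l b c) : keyEq l a c :=
  fun i hi => (h₁ i hi).trans (h₂ i hi)

theorem block_eq_of_keyEq (h : keyEq l x y) : Block l D x = Block l D y := by
  ext c
  exact and_congr_right fun _ => ⟨h.symm.trans, h.trans⟩

theorem Consistent.insert (hr : Consistent l r) (hx : ∀ a ∈ r, ¬ keyEq l x a) :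
    Consistent l (insert x r) := by
  rintro a (rfl | ha) b (rfl | hb) hab
  · rfl
  · exact absurd hab (hx b hb)
  · exact absurd hab.symm (hx a ha)
  · exact hr a ha b hb hab

theorem Repair.exists_mem_keyEq (hr : Repair l D r) (hx : x ∈ D) : ∃ a ∈ r, keyEq l x a := by
  obtain ⟨hrD, hrc, hmax⟩ := hr
  by_contra! hx_r
  have hins := hmax (insert x r) (Set.subset_insert x r) (Set.insert_subset hx hrD)
    (hrc.insert hx_r)
  exact hx_r x (hins ▸ Set.mem_insert x r) (keyEq_refl x)

theorem SolSym.sat (h : SolSym q D a b) (ha : a ∈ r) (hb : b ∈ r) : Sat q r := by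
  rcases h with ⟨-, -, hab⟩ | ⟨-, -, hba⟩
  exacts [⟨a, b, ha, hb, hab⟩, ⟨b, a, hb, ha, hba⟩]

theorem mem_cliqueOf_self (ha : a ∈ D) : a ∈ cliqueOf l q D a := by
  unfold cliqueOf
  split_ifs
  exacts [⟨ha, .refl⟩, rfl]

theorem keyEq_or_solSym_of_mem_cliqueOf (ha : a ∈ D) (hb : b ∈ cliqueOf l q D a) :
    keyEq l a b ∨ SolSym q D a b := by
  unfold cliqueOf at hb
  split_ifs at hb with hquasi
  · exact or_iff_not_imp_left.2 (hquasi a ⟨ha, .refl⟩ b hb)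
  · rw [Set.mem_singleton_iff.1 hb]
    exact .inl (keyEq_refl a)

/-- Send each block to `clique(a)` for its fact `a` in a repair falsifying `q`. Two blocks with
the same image give two facts of the repair in one quasi-clique, which would be joined by a
solution unless they are key-equal. -/
theorem Repair.saturatingMatching (hr : Repair l D r) (hsat : ¬ Sat q r) :
    SaturatingMatching l q D := by
  have hrep : ∀ x ∈ D, (Block l D x ∩ r).Nonempty := fun x hx => by
    obtain ⟨a, har, hxa⟩ := hr.exists_mem_keyEq hx
    exact ⟨a, ⟨hr.1 har, hxa⟩, har⟩
  have hno_sol : ∀ a ∈ r, ∀ b ∈ r, ¬ SolSym q D a b := fun a ha b hb h => hsat (h.sat ha hb)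
  classical
  refine ⟨fun B => if h : (B ∩ r).Nonempty then cliqueOf l q D h.some else ∅, ?_, ?_⟩
  · intro x hx
    obtain ⟨⟨haD, -⟩, har⟩ := (hrep x hx).some_mem
    simp only [dif_pos (hrep x hx)]
    exact ⟨⟨x, hx, rfl⟩, ⟨_, haD, rfl⟩, _, (hrep x hx).some_mem.1, mem_cliqueOf_self haD,
      fun h => hno_sol _ har _ har (.inl h)⟩
  · intro x hx y hy hxy
    simp only [dif_pos (hrep x hx), dif_pos (hrep y hy)] at hxy
    obtain ⟨⟨haD, hxa⟩, har⟩ := (hrep x hx).some_mem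
    obtain ⟨⟨hbD, hyb⟩, hbr⟩ := (hrep y hy).some_mem
    have hab := (keyEq_or_solSym_of_mem_cliqueOf haD (hxy ▸ mem_cliqueOf_self hbD)).resolve_right
      (hno_sol _ har _ hbr)
    exact block_eq_of_keyEq ((hxa.trans hab).trans hyb.symm)

end CQA

theorem no_matching_certain_general (n l : ℕ) (Elem Var : Type) (q : CQA.Query n Var)
    (D : Set (Fin n → Elem)) (hm : ¬ CQA.SaturatingMatching l q D) :
    CQA.Certain l q D :=
  fun _ hr => by_contra fun hsat => hm (hr.saturatingMatching hsat)

/-- if `H(D,q)` admits no matching saturating the blocks of `D`, then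
`D ⊨ certain(q)`. -/
theorem no_matching_certain (n l : ℕ) (hn : 1 ≤ n) (hl : l ≤ n)
    (Elem Var : Type) [Countable Elem] [Infinite Elem] [Countable Var] [Infinite Var]
    (q : CQA.Query n Var) (hq : CQA.TwoWayDet l q)
    (D : Set (Fin n → Elem)) (hD : D.Finite)
    (hm : ¬ CQA.SaturatingMatching l q D) :
    CQA.Certain l q D :=
  no_matching_certain_general n l Elem Var q D hm
end
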